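/- arXiv:math/0201180 — 7 statements merged into one kernel-verified Lean document; each statement's English description precedes it below -/
import Mathlib

section
/- Let p be a prime, R a commutative ring of characteristic p, e ≥ 1, and (M,F) a unit R[F^e]-module. Then M is finitely generated as an R[F^e]-module — i.e. there is a finite subset S ⊆ M such that the elements F^j(s) (j ≥ 0, s ∈ S) generate M as an R-module — if and only if (M,F) has a root, i.e. a finitely generated R-submodule N with N ⊆ R·F(N) and M = ⋃_{j≥0} R·F^j(N). -/
open TensorProduct

/-- A copy of `R` whose `R`-module structure is twisted by the ring endomorphism `φ`:
`r • r' = φ r * r'`.  For `φ` the `e`-th Frobenius iterate this is the bimodule `R^e`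
of Lyubeznik/Blickle, i.e. the left tensor factor of the Frobenius functor `F^{e*}`. -/
def Twisted (R : Type) [CommRing R] (φ : R →+* R) : Type := R

instance (R : Type) [CommRing R] (φ : R →+* R) : AddCommGroup (Twisted R φ) :=
  inferInstanceAs (AddCommGroup R)

instance (R : Type) [CommRing R] (φ : R →+* R) : Module R (Twisted R φ) :=
  Module.compHom R φ

/-- The element of the twisted copy of `R` corresponding to `r`. -/
def tw {R : Type} [CommRing R] (φ : R →+* R) (r : R) : Twisted R φ := r

/-- `R·F(N)` : the `R`-submodule of `M` generated by the image of `N` under `F`.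
`R·F^j(N)` is its `j`-fold iterate `(spanF F)^[j] N`. -/
def spanF {R M : Type} [CommRing R] [AddCommGroup M] [Module R M]
    (F : M → M) (N : Submodule R M) : Submodule R M :=
  Submodule.span R (F '' (N : Set M))

/-- `(M, F)` is a *unit* `R[Fᵉ]`-module: the linearization
`θ : R ⊗_φ M → M`, `r ⊗ m ↦ r • F m`, is bijective. -/
def IsUnitFModule {R M : Type} [CommRing R] [AddCommGroup M] [Module R M]
    (φ : R →+* R) (F : M → M) : Prop :=
  ∃ θ : Twisted R φ ⊗[R] M →+ M,
    (∀ (r : R) (m : M), θ (tw φ r ⊗ₜ[R] m) = r • F m) ∧ Function.Bijective θ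

/-- `(M, F)` is a finitely generated `R[Fᵉ]`-module: there is a finite subset
`S ⊆ M` such that the elements `F^[j] s`, `j ≥ 0`, `s ∈ S`, generate `M` as an
`R`-module. -/
def IsFGFModule (R : Type) {M : Type} [CommRing R] [AddCommGroup M] [Module R M]
    (F : M → M) : Prop :=
  ∃ S : Finset M, Submodule.span R (⋃ j : ℕ, F^[j] '' (S : Set M)) = ⊤

section Aux

variable {R M : Type} [CommRing R] [AddCommGroup M] [Module R M] (F : M → M)

lemma spanF_mono {A B : Submodule R M} (h : A ≤ B) : spanF F A ≤ spanF F B :=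
  Submodule.span_mono (Set.image_mono h)

lemma spanF_iterate_mono (j : ℕ) {A B : Submodule R M} (h : A ≤ B) :
    (spanF F)^[j] A ≤ (spanF F)^[j] B := by
  induction j generalizing A B with
  | zero => exact h
  | succ j ih =>
    rw [Function.iterate_succ_apply', Function.iterate_succ_apply']
    exact spanF_mono F (ih h)

variable {q : ℕ} (hFadd : ∀ x y : M, F (x + y) = F x + F y)
    (hFsl : ∀ (r : R) (m : M), F (r • m) = r ^ q • F m)

include hFadd

lemma F_zero' : F 0 = 0 := by
  have h := hFadd 0 0
  rw [add_zero] at h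
  exact (left_eq_add.mp h)

include hFsl

lemma spanF_span (s : Set M) :
    spanF F (Submodule.span R s) = Submodule.span R (F '' s) := by
  refine le_antisymm ?_ (Submodule.span_mono (Set.image_mono Submodule.subset_span))
  rw [spanF, Submodule.span_le]
  rintro _ ⟨x, hx, rfl⟩
  induction hx using Submodule.span_induction with
  | mem y hy => exact Submodule.subset_span ⟨y, hy, rfl⟩
  | zero => rw [F_zero' F hFadd]; exact Submodule.zero_mem _
  | add x y _ _ hx hy => rw [hFadd]; exact Submodule.add_mem _ hx hy
  | smul r x _ hx => rw [hFsl]; exact Submodule.smul_mem _ _ hx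

lemma spanF_iterate_span (s : Set M) (j : ℕ) :
    (spanF F)^[j] (Submodule.span R s) = Submodule.span R (F^[j] '' s) := by
  induction j with
  | zero => simp
  | succ j ih =>
    rw [Function.iterate_succ_apply', ih, spanF_span F hFadd hFsl,
      Function.iterate_succ', Set.image_comp]

end Aux

lemma spanF_top' {R M : Type} [CommRing R] [AddCommGroup M] [Module R M]
    (φ : R →+* R) (F : M → M) (hunit : IsUnitFModule φ F) :
    spanF F (⊤ : Submodule R M) = ⊤ := by
  obtain ⟨θ, hθ, hinj, hsurj⟩ := hunit
  refine le_antisymm le_top ?_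
  intro m _
  obtain ⟨t, rfl⟩ := hsurj m
  induction t using TensorProduct.induction_on with
  | zero => rw [map_zero]; exact Submodule.zero_mem _
  | tmul r x =>
    rw [show (r ⊗ₜ[R] x : Twisted R φ ⊗[R] M) = tw φ r ⊗ₜ[R] x from rfl, hθ r x]
    exact Submodule.smul_mem _ _ (Submodule.subset_span ⟨x, trivial, rfl⟩)
  | add x y hx hy => rw [map_add]; exact Submodule.add_mem _ (hx Submodule.mem_top) (hy Submodule.mem_top)


/-- A unit `R[Fᵉ]`-module is finitely generated as an
`R[Fᵉ]`-module if and only if it has a *root*: a finitely generated `R`-submodule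
`N` with `N ⊆ R·F(N)` and `M = ⋃_j R·F^j(N)`. -/
theorem unit_fg_iff_has_root
    (p : ℕ) (hp : p.Prime)
    (R : Type) [CommRing R] [CharP R p]
    (M : Type) [AddCommGroup M] [Module R M]
    (e : ℕ) (he : 1 ≤ e)
    (φ : R →+* R) (hφ : ∀ r : R, φ r = r ^ p ^ e)
    (F : M → M) (hFadd : ∀ x y : M, F (x + y) = F x + F y)
    (hFsl : ∀ (r : R) (m : M), F (r • m) = r ^ p ^ e • F m)
    (hunit : IsUnitFModule φ F) :
    IsFGFModule R F ↔
      ∃ N : Submodule R M, N.FG ∧ N ≤ spanF F N ∧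
        ∀ m : M, ∃ j : ℕ, m ∈ (spanF F)^[j] N := by
  constructor
  · rintro ⟨S, hS⟩
    set U : ℕ → Set M := fun k => ⋃ j ∈ Set.Iic k, F^[j] '' (S : Set M) with hU
    set N : ℕ → Submodule R M := fun k => Submodule.span R (U k) with hN
    have hUmono : Monotone U := fun k k' hk =>
      Set.iUnion₂_mono' fun j hj => ⟨j, le_trans hj hk, le_refl _⟩
    have hNmono : Monotone N := fun k k' hk => Submodule.span_mono (hUmono hk)
    have hUnion : ⋃ k, U k = ⋃ j, F^[j] '' (S : Set M) := by
      ext x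
      simp only [hU, Set.mem_iUnion, Set.mem_Iic]
      constructor
      · rintro ⟨k, j, _, h⟩; exact ⟨j, h⟩
      · rintro ⟨j, h⟩; exact ⟨j, j, le_refl j, h⟩
    have hNtop : (⨆ k, N k) = ⊤ := by
      rw [hN, ← Submodule.span_iUnion, hUnion, hS]
    have hmemN : ∀ m : M, ∃ k, m ∈ N k := by
      intro m
      have hm : m ∈ ⨆ k, N k := hNtop.symm ▸ Submodule.mem_top
      exact (Submodule.mem_iSup_of_chain ⟨N, hNmono⟩ m).mp hm
    have hspanF_top : (⨆ k, spanF F (N k)) = ⊤ := by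
      have heq : ∀ k, spanF F (N k) = Submodule.span R (F '' U k) := fun k =>
        spanF_span F hFadd hFsl (U k)
      calc (⨆ k, spanF F (N k))
          = ⨆ k, Submodule.span R (F '' U k) := iSup_congr heq
        _ = Submodule.span R (⋃ k, F '' U k) := (Submodule.span_iUnion _).symm
        _ = Submodule.span R (F '' ⋃ k, U k) := by rw [Set.image_iUnion]
        _ = spanF F (Submodule.span R (⋃ k, U k)) := (spanF_span F hFadd hFsl _).symm
        _ = spanF F ⊤ := by rw [hUnion, hS]
        _ = ⊤ := spanF_top' φ F hunit
    have hkey : ∀ s ∈ S, ∃ k, (s : M) ∈ spanF F (N k) := by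
      intro s hs
      have hmono2 : Monotone fun k => spanF F (N k) := fun a b hab =>
        spanF_mono F (hNmono hab)
      have hm : (s : M) ∈ ⨆ k, spanF F (N k) := hspanF_top.symm ▸ Submodule.mem_top
      exact (Submodule.mem_iSup_of_chain ⟨_, hmono2⟩ s).mp hm
    choose f hf using hkey
    set K : ℕ := S.attach.sup fun s => f s.1 s.2 with hK
    have hfK : ∀ s (hs : s ∈ S), f s hs ≤ K := fun s hs =>
      Finset.le_sup (f := fun s : {x // x ∈ S} => f s.1 s.2) (Finset.mem_attach _ ⟨s, hs⟩)
    have hSsub : ∀ s ∈ S, s ∈ spanF F (N K) := fun s hs =>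
      spanF_mono F (hNmono (hfK s hs)) (hf s hs)
    have hSinU : ∀ k, (S : Set M) ⊆ U k := by
      intro k s hs
      rw [hU]
      exact Set.mem_iUnion₂.mpr ⟨0, Set.mem_Iic.mpr (Nat.zero_le k),
        by simpa using Set.mem_image_of_mem (F^[0]) hs⟩
    have hroot1 : N K ≤ spanF F (N K) := by
      rw [hN, Submodule.span_le]
      intro x hx
      rw [hU] at hx
      simp only [Set.mem_iUnion, Set.mem_Iic] at hx
      obtain ⟨j, hj, y, hy, rfl⟩ := hx
      cases j with
      | zero => simpa using hSsub y hy
      | succ j =>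
        rw [Function.iterate_succ_apply']
        refine Submodule.subset_span ⟨F^[j] y, ?_, rfl⟩
        refine Submodule.subset_span ?_
        rw [hU]
        exact Set.mem_iUnion₂.mpr ⟨j, Set.mem_Iic.mpr (Nat.le_of_succ_le hj), ⟨y, hy, rfl⟩⟩
    refine ⟨N K, ?_, hroot1, ?_⟩
    · apply Submodule.fg_span
      apply Set.Finite.biUnion (Set.finite_Iic K)
      intro j _
      exact S.finite_toSet.image _
    · have hchain : Monotone fun j => (spanF F)^[j] (N K) := by
        apply monotone_nat_of_le_succ
        intro j
        induction j with
        | zero => simpa using hroot1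
        | succ j ih =>
          rw [Function.iterate_succ_apply', Function.iterate_succ_apply']
          exact spanF_mono F ih
      intro m
      obtain ⟨k, hk⟩ := hmemN m
      refine ⟨k, ?_⟩
      have hNk : N k ≤ (spanF F)^[k] (N K) := by
        rw [hN, Submodule.span_le]
        intro x hx
        rw [hU] at hx
        simp only [Set.mem_iUnion, Set.mem_Iic] at hx
        obtain ⟨j, hj, y, hy, rfl⟩ := hx
        have h1 : F^[j] y ∈ (spanF F)^[j] (Submodule.span R (S : Set M)) := by
          rw [spanF_iterate_span F hFadd hFsl]
          exact Submodule.subset_span ⟨y, hy, rfl⟩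
        have h2 : Submodule.span R (S : Set M) ≤ N K :=
          Submodule.span_le.mpr fun s hs => Submodule.subset_span (hSinU K hs)
        exact hchain hj (spanF_iterate_mono F j h2 h1)
      exact hNk hk
  · rintro ⟨N, hfg, _, hcov⟩
    obtain ⟨S, hSpan⟩ := hfg
    refine ⟨S, ?_⟩
    rw [eq_top_iff]
    intro m _
    obtain ⟨j, hm⟩ := hcov m
    rw [← hSpan, spanF_iterate_span F hFadd hFsl] at hm
    exact Submodule.span_mono (Set.subset_iUnion (fun j => F^[j] '' (S : Set M)) j) hm
end

section
/- Let p be a prime and R a Noetherian commutative ring of characteristic p whose Frobenius endomorphism r ↦ r^p is flat (for example, a regular ring). Fix e ≥ 1 and let (M,F) be a finitely generated unit R[F^e]-module with root M₀. Then every unit R[F^e]-submodule N of M (i.e. every R-submodule N with R·F(N) = N) is itself a finitely generated unit R[F^e]-module; in fact M₀ ∩ N is a root of (N, F restricted to N). -/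
open TensorProduct

/-!
The `e`-th Frobenius iterate `φ` is flat, so `R ⊗_φ -` is exact. For a submodule `A`, `R·F(A)` is
the image under the linearization `θ` of `R ⊗_φ A ⊆ R ⊗_φ M`; since `θ` is injective and flat
base change commutes with intersections of submodules, `R·F(A ⊓ B) = R·F(A) ⊓ R·F(B)`.
Taking `B = N`, a fixed point of `R·F`, gives `R·F^j(M₀ ⊓ N) = R·F^j(M₀) ⊓ N`, so `M₀ ⊓ N` is a
root of `N`; it is finitely generated since `R` is Noetherian, and `N` is unit because `θ`
restricts to a bijection `R ⊗_φ N ≅ R·F(N) = N`.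
-/

open LinearMap

lemma RingHom.Flat.pow {R : Type*} [CommRing R] {f : R →+* R} (hf : f.Flat) (n : ℕ) :
    (f ^ n).Flat := by
  induction n with
  | zero => exact RingHom.Flat.id R
  | succ n ih => rw [pow_succ]; exact hf.comp ih

lemma range_lTensor_subtype_inf {R M T : Type*} [CommRing R] [AddCommGroup M] [Module R M]
    [AddCommGroup T] [Module R T] [Module.Flat R T] (A B : Submodule R M) :
    range (lTensor T (A ⊓ B).subtype)
      = range (lTensor T A.subtype) ⊓ range (lTensor T B.subtype) := by
  have hA : (A ⊓ B).subtype = A.subtype ∘ₗ Submodule.inclusion inf_le_left :=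
    ((A ⊓ B).subtype_comp_inclusion A inf_le_left).symm
  have hB : (A ⊓ B).subtype = B.subtype ∘ₗ Submodule.inclusion inf_le_right :=
    ((A ⊓ B).subtype_comp_inclusion B inf_le_right).symm
  refine le_antisymm (le_inf ?_ ?_) ?_
  · rw [hA, lTensor_comp]; exact range_comp_le_range _ _
  · rw [hB, lTensor_comp]; exact range_comp_le_range _ _
  rintro z ⟨⟨u, rfl⟩, ⟨v, hv⟩⟩
  -- `A ⊓ B` is the kernel of `A → M ⧸ B`, and flat base change preserves this exactness.
  have hexact :
      Function.Exact (Submodule.inclusion (inf_le_left : A ⊓ B ≤ A)) (B.mkQ ∘ₗ A.subtype) := by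
    intro a
    simp only [coe_comp, Function.comp_apply, Submodule.mkQ_apply, Submodule.subtype_apply,
      Submodule.Quotient.mk_eq_zero, Set.mem_range]
    exact ⟨fun ha => ⟨⟨a, a.2, ha⟩, rfl⟩, by rintro ⟨w, rfl⟩; exact w.2.2⟩
  have hu : lTensor T (B.mkQ ∘ₗ A.subtype) u = 0 := by
    rw [lTensor_comp, comp_apply, ← hv]
    exact (Module.Flat.lTensor_exact T (exact_subtype_mkQ B) _).mpr ⟨v, rfl⟩
  obtain ⟨w, hw⟩ := (Module.Flat.lTensor_exact T hexact u).mp hu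
  exact ⟨w, by rw [hA, lTensor_comp, comp_apply, hw]⟩

lemma iterate_inf_of_map_inf {α : Type*} [SemilatticeInf α] {f : α → α}
    (hf : ∀ a b, f (a ⊓ b) = f a ⊓ f b) {b : α} (hb : f b = b) (a : α) (j : ℕ) :
    f^[j] (a ⊓ b) = f^[j] a ⊓ b := by
  induction j with
  | zero => rfl
  | succ j ih => rw [Function.iterate_succ_apply', Function.iterate_succ_apply', ih, hf, hb]

def untw {R : Type} [CommRing R] {φ : R →+* R} (t : Twisted R φ) : R := t

/-- Multiplication by `r` on the twisted factor; `θ` turns it into the untwisted action of `r`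
on `M`, which makes `θ`-images closed under scalars although `θ` is only additive. -/
def mulTw {R : Type} [CommRing R] (φ : R →+* R) (r : R) : Twisted R φ →ₗ[R] Twisted R φ where
  toFun t := tw φ (r * untw t)
  map_add' x y := mul_add r (untw x) (untw y)
  map_smul' s t := mul_left_comm r (φ s) (untw t)

section Linearization

variable {R M : Type} [CommRing R] [AddCommGroup M] [Module R M] {φ : R →+* R} {F : M → M}
  {θ : Twisted R φ ⊗[R] M →+ M}

lemma map_rTensor_mulTw (hθ : ∀ (r : R) (m : M), θ (tw φ r ⊗ₜ[R] m) = r • F m)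
    (r : R) (y : Twisted R φ ⊗[R] M) :
    θ (rTensor M (mulTw φ r) y) = r • θ y := by
  induction y using TensorProduct.induction_on with
  | zero => simp
  | tmul t m =>
    exact (hθ (r * untw t) m).trans ((mul_smul ..).trans (congrArg _ (hθ _ m).symm))
  | add x y hx hy => rw [map_add, map_add, map_add, hx, hy, smul_add]

lemma mem_spanF_iff (hθ : ∀ (r : R) (m : M), θ (tw φ r ⊗ₜ[R] m) = r • F m)
    (A : Submodule R M) (m : M) :
    m ∈ spanF F A ↔ ∃ x : Twisted R φ ⊗[R] A, θ (lTensor (Twisted R φ) A.subtype x) = m := by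
  constructor
  · intro hm
    induction hm using Submodule.span_induction with
    | mem _ h =>
      obtain ⟨a, ha, rfl⟩ := h
      exact ⟨tw φ 1 ⊗ₜ[R] ⟨a, ha⟩, by rw [lTensor_tmul]; simpa using hθ 1 a⟩
    | zero => exact ⟨0, by rw [map_zero, map_zero]⟩
    | add x y _ _ hx hy =>
      obtain ⟨u, rfl⟩ := hx
      obtain ⟨v, rfl⟩ := hy
      exact ⟨u + v, by rw [map_add, map_add]⟩
    | smul r x _ hx =>
      obtain ⟨u, rfl⟩ := hx
      refine ⟨rTensor A (mulTw φ r) u, ?_⟩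
      rw [← comp_apply, lTensor_comp_rTensor, ← rTensor_comp_lTensor, comp_apply,
        map_rTensor_mulTw hθ]
  · rintro ⟨x, rfl⟩
    induction x using TensorProduct.induction_on with
    | zero => rw [map_zero, map_zero]; exact zero_mem _
    | tmul t a =>
      rw [lTensor_tmul]
      exact (hθ (untw t) a).symm ▸ Submodule.smul_mem _ _ (Submodule.subset_span ⟨a, a.2, rfl⟩)
    | add x y hx hy => rw [map_add, map_add]; exact add_mem hx hy

lemma spanF_inf [Module.Flat R (Twisted R φ)]
    (hθ : ∀ (r : R) (m : M), θ (tw φ r ⊗ₜ[R] m) = r • F m)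
    (hinj : Function.Injective θ) (A B : Submodule R M) :
    spanF F (A ⊓ B) = spanF F A ⊓ spanF F B := by
  refine le_antisymm (le_inf (Submodule.span_mono (Set.image_mono inf_le_left))
    (Submodule.span_mono (Set.image_mono inf_le_right))) ?_
  rintro m ⟨hA, hB⟩
  obtain ⟨x, hx⟩ := (mem_spanF_iff hθ A m).mp hA
  obtain ⟨y, hy⟩ := (mem_spanF_iff hθ B m).mp hB
  have hxy : lTensor _ B.subtype y = lTensor _ A.subtype x := hinj (hy.trans hx.symm)
  obtain ⟨w, hw⟩ : lTensor _ A.subtype x ∈ range (lTensor _ (A ⊓ B).subtype) := by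
    rw [range_lTensor_subtype_inf]
    exact ⟨⟨x, rfl⟩, ⟨y, hxy⟩⟩
  exact (mem_spanF_iff hθ (A ⊓ B) m).mpr ⟨w, by rw [hw, hx]⟩

lemma IsUnitFModule.restrict [Module.Flat R (Twisted R φ)] (hunit : IsUnitFModule φ F)
    {N : Submodule R M} (hN : spanF F N = N) :
    IsUnitFModule (M := N) φ
      (fun x : N => ⟨F x, hN.le (Submodule.subset_span ⟨x, x.2, rfl⟩)⟩) := by
  obtain ⟨θ, hθ, hinj, -⟩ := hunit
  have hmem (x : Twisted R φ ⊗[R] N) : θ (lTensor _ N.subtype x) ∈ N :=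
    hN.le ((mem_spanF_iff hθ N _).mpr ⟨x, rfl⟩)
  refine ⟨(θ.comp (lTensor _ N.subtype).toAddMonoidHom).codRestrict N hmem,
    fun r n => Subtype.ext (hθ r n), fun a b hab => ?_, fun ⟨m, hm⟩ => ?_⟩
  · exact Module.Flat.lTensor_preserves_injective_linearMap _ N.injective_subtype
      (hinj (congrArg Subtype.val hab))
  · obtain ⟨x, hx⟩ := (mem_spanF_iff hθ N m).mp (hN.ge hm)
    exact ⟨x, Subtype.ext hx⟩

end Linearization

theorem unit_submodule_fg_with_root_general
    (p : ℕ)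
    (R : Type) [CommRing R] [IsNoetherianRing R]
    (φp : R →+* R) (hφp : ∀ r : R, φp r = r ^ p) (hflat : φp.Flat)
    (M : Type) [AddCommGroup M] [Module R M]
    (e : ℕ)
    (φ : R →+* R) (hφ : ∀ r : R, φ r = r ^ p ^ e)
    (F : M → M)
    (hunit : IsUnitFModule φ F)
    (M₀ : Submodule R M) (hroot : M₀.FG ∧ M₀ ≤ spanF F M₀ ∧
      ∀ m : M, ∃ j : ℕ, m ∈ (spanF F)^[j] M₀)
    (N : Submodule R M) (hN : spanF F N = N) :
    IsUnitFModule (M := ↥N) φ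
      (fun x : N => (⟨F x.1,
        (SetLike.ext_iff.mp hN (F x.1)).mp
          (Submodule.subset_span ⟨x.1, x.2, rfl⟩)⟩ : N)) ∧
    (M₀ ⊓ N).FG ∧ (M₀ ⊓ N) ≤ spanF F (M₀ ⊓ N) ∧
      ∀ m ∈ N, ∃ j : ℕ, m ∈ (spanF F)^[j] (M₀ ⊓ N) := by
  have hφ_eq : φ = φp ^ e := RingHom.ext fun r => by
    rw [hφ, RingHom.coe_pow, show ⇑φp = (· ^ p) from funext hφp, pow_iterate]
  have : Module.Flat R (Twisted R φ) := hφ_eq ▸ hflat.pow e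
  obtain ⟨θ, hθ, hinj, -⟩ := id hunit
  have hinf := spanF_inf hθ hinj
  obtain ⟨hfg, hle, hgen⟩ := hroot
  refine ⟨hunit.restrict hN, hfg.of_le inf_le_left, ?_, fun m hm => ?_⟩
  · rw [hinf, hN]
    exact inf_le_inf_right N hle
  · obtain ⟨j, hj⟩ := hgen m
    exact ⟨j, (iterate_inf_of_map_inf hinf hN M₀ j).ge ⟨hj, hm⟩⟩

/-- Over a Noetherian ring of characteristic `p` with flat
Frobenius, a unit `R[Fᵉ]`-submodule `N` of a finitely generated unit
`R[Fᵉ]`-module with root `M₀` is itself a finitely generated unit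
`R[Fᵉ]`-module (i.e. it is unit and has a root); in fact `M₀ ⊓ N` is a root of
`(N, F|_N)`. -/
theorem unit_submodule_fg_with_root
    (p : ℕ) [Fact p.Prime]
    (R : Type) [CommRing R] [IsNoetherianRing R] [CharP R p]
    (φp : R →+* R) (hφp : ∀ r : R, φp r = r ^ p) (hflat : φp.Flat)
    (M : Type) [AddCommGroup M] [Module R M]
    (e : ℕ) (he : 1 ≤ e)
    (φ : R →+* R) (hφ : ∀ r : R, φ r = r ^ p ^ e)
    (F : M → M) (hFadd : ∀ x y : M, F (x + y) = F x + F y)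
    (hFsl : ∀ (r : R) (m : M), F (r • m) = r ^ p ^ e • F m)
    (hunit : IsUnitFModule φ F)
    (M₀ : Submodule R M) (hroot : M₀.FG ∧ M₀ ≤ spanF F M₀ ∧
      ∀ m : M, ∃ j : ℕ, m ∈ (spanF F)^[j] M₀)
    (N : Submodule R M) (hN : spanF F N = N) :
    IsUnitFModule (M := ↥N) φ
      (fun x : N => (⟨F x.1,
        (SetLike.ext_iff.mp hN (F x.1)).mp
          (Submodule.subset_span ⟨x.1, x.2, rfl⟩)⟩ : N)) ∧
    (M₀ ⊓ N).FG ∧ (M₀ ⊓ N) ≤ spanF F (M₀ ⊓ N) ∧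
      ∀ m ∈ N, ∃ j : ℕ, m ∈ (spanF F)^[j] (M₀ ⊓ N) :=
  unit_submodule_fg_with_root_general p R φp hφp hflat M e φ hφ F hunit M₀ hroot N hN
end

section
/- Let p be a prime and R a Noetherian commutative ring of characteristic p whose Frobenius endomorphism r ↦ r^p is flat (for example, a regular ring). Fix e ≥ 1 and let 0 → M' →^ι M →^π M'' → 0 be a short exact sequence of R-modules equipped with φ-semilinear additive maps F' : M' → M', F : M → M, F'' : M'' → M'' satisfying ι ∘ F' = F ∘ ι and π ∘ F = F'' ∘ π. If (M',F') and (M'',F'') are finitely generated unit R[F^e]-modules, then (M,F) is a finitely generated unit R[F^e]-module. -/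
open TensorProduct

/-! The linearizations `θ` of the three modules map the sequence
`R ⊗_φ M' → R ⊗_φ M → R ⊗_φ M'' → 0`, exact by right exactness of `R ⊗_φ -`, to the sequence
`0 → M' → M → M'' → 0`. Diagram chases through these two rows make the middle `θ` injective and
surjective as soon as the outer ones are. For finite generation, lifts of the generators of `M''`
together with the images of the generators of `M'` generate `M`. -/

namespace AddMonoidHom

variable {A B C A' B' C' : Type*} [AddCommGroup A] [AddCommGroup B] [AddCommGroup C]
  [AddCommGroup A'] [AddCommGroup B'] [AddCommGroup C']
  (f : A →+ B) (g : B →+ C) (f' : A' →+ B') (g' : B' →+ C')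
  {α : A →+ A'} {β : B →+ B'} {γ : C →+ C'}

theorem injective_of_injective_of_injective_of_left_exact (hfg : Function.Exact f g)
    (hf' : Function.Injective f') (hα : Function.Injective α) (hγ : Function.Injective γ)
    (hαβ : ∀ a, β (f a) = f' (α a)) (hβγ : ∀ b, γ (g b) = g' (β b)) :
    Function.Injective β := by
  rw [_root_.injective_iff_map_eq_zero β]
  intro b hb
  obtain ⟨a, rfl⟩ := (hfg b).mp <| hγ <| by rw [hβγ, hb, map_zero, map_zero]
  obtain rfl : a = 0 := hα <| hf' <| by rw [← hαβ, hb, map_zero, map_zero]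
  exact map_zero f

theorem surjective_of_surjective_of_surjective_of_right_exact (hf'g' : Function.Exact f' g')
    (hg : Function.Surjective g) (hα : Function.Surjective α) (hγ : Function.Surjective γ)
    (hαβ : ∀ a, β (f a) = f' (α a)) (hβγ : ∀ b, γ (g b) = g' (β b)) :
    Function.Surjective β := by
  intro b'
  obtain ⟨c, hc⟩ := hγ (g' b')
  obtain ⟨b, rfl⟩ := hg c
  obtain ⟨a', ha'⟩ := (hf'g' (b' - β b)).mp <| by rw [map_sub, ← hβγ, hc, sub_self]
  obtain ⟨a, rfl⟩ := hα a'
  exact ⟨b + f a, by rw [map_add, hαβ, ha', add_sub_cancel]⟩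

end AddMonoidHom

section FrobeniusModule

variable {R : Type} [CommRing R] {φ : R →+* R} {M M₁ M₂ M₃ : Type} [AddCommGroup M] [Module R M]
  [AddCommGroup M₁] [Module R M₁] [AddCommGroup M₂] [Module R M₂] [AddCommGroup M₃] [Module R M₃]

def linearization (φ : R →+* R) (F : M →+ M) (hF : ∀ (r : R) (m : M), F (r • m) = φ r • F m) :
    Twisted R φ ⊗[R] M →+ M :=
  TensorProduct.liftAddHom
    ((AddMonoidHom.compHom' F).comp (smulAddHom R M) : Twisted R φ →+ M →+ M)
    fun r (x : R) m => by
      show (φ r * x) • F m = x • F (r • m)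
      rw [hF, mul_comm, mul_smul]

theorem linearization_tmul (F : M →+ M) (hF : ∀ (r : R) (m : M), F (r • m) = φ r • F m)
    (r : R) (m : M) : linearization φ F hF (tw φ r ⊗ₜ[R] m) = r • F m :=
  rfl

theorem apply_lTensor_eq_of_semiconj {F₁ : M₁ → M₁} {F₂ : M₂ → M₂} {θ₁ : Twisted R φ ⊗[R] M₁ →+ M₁}
    {θ₂ : Twisted R φ ⊗[R] M₂ →+ M₂} (hθ₁ : ∀ (r : R) (m : M₁), θ₁ (tw φ r ⊗ₜ[R] m) = r • F₁ m)
    (hθ₂ : ∀ (r : R) (m : M₂), θ₂ (tw φ r ⊗ₜ[R] m) = r • F₂ m) (f : M₁ →ₗ[R] M₂)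
    (hf : Function.Semiconj f F₁ F₂) (x : Twisted R φ ⊗[R] M₁) :
    θ₂ (f.lTensor (Twisted R φ) x) = f (θ₁ x) := by
  induction x using TensorProduct.induction_on with
  | zero => simp only [map_zero]
  | tmul t m =>
    obtain ⟨r, rfl⟩ : ∃ r : R, tw φ r = t := ⟨t, rfl⟩
    rw [LinearMap.lTensor_tmul, hθ₁, hθ₂, map_smul, hf]
  | add x y hx hy => simp only [map_add, hx, hy]

theorem Submodule.map_span_iUnion_iterate_image {F₁ : M₁ → M₁} {F₂ : M₂ → M₂} (f : M₁ →ₗ[R] M₂)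
    (hf : Function.Semiconj f F₁ F₂) (S : Set M₁) :
    (Submodule.span R (⋃ j : ℕ, F₁^[j] '' S)).map f =
      Submodule.span R (⋃ j : ℕ, F₂^[j] '' (f '' S)) := by
  rw [Submodule.map_span, Set.image_iUnion]
  simp only [← Set.image_comp, (hf.iterate_right _).comp_eq]

theorem Function.Exact.eq_top_of_range_le_of_map_eq_top {f : M₁ →ₗ[R] M₂} {g : M₂ →ₗ[R] M₃}
    (hfg : Function.Exact f g) {N : Submodule R M₂} (hf : LinearMap.range f ≤ N)
    (hg : N.map g = ⊤) : N = ⊤ := by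
  rw [← Submodule.comap_top g, ← hg, Submodule.comap_map_eq, hfg.linearMap_ker_eq,
    sup_of_le_left hf]

theorem IsFGFModule.of_exact {ι : M₁ →ₗ[R] M₂} {π : M₂ →ₗ[R] M₃} (hsurj : Function.Surjective π)
    (hexact : Function.Exact ι π) {F₁ : M₁ → M₁} {F₂ : M₂ → M₂} {F₃ : M₃ → M₃}
    (hι : Function.Semiconj ι F₁ F₂) (hπ : Function.Semiconj π F₂ F₃)
    (h₁ : IsFGFModule R F₁) (h₃ : IsFGFModule R F₃) : IsFGFModule R F₂ := by
  classical
  obtain ⟨S₁, hS₁⟩ := h₁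
  obtain ⟨S₃, hS₃⟩ := h₃
  let σ := Function.surjInv hsurj
  refine ⟨S₃.image σ ∪ S₁.image ι, hexact.eq_top_of_range_le_of_map_eq_top ?_ ?_⟩
  · rw [LinearMap.range_eq_map, ← hS₁, Submodule.map_span_iUnion_iterate_image ι hι]
    refine Submodule.span_mono (Set.iUnion_mono fun j => Set.image_mono ?_)
    push_cast
    exact Set.subset_union_right
  · rw [Submodule.map_span_iUnion_iterate_image π hπ, eq_top_iff, ← hS₃]
    refine Submodule.span_mono (Set.iUnion_mono fun j => Set.image_mono ?_)
    intro x hx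
    exact ⟨σ x, by push_cast; exact Or.inl ⟨x, hx, rfl⟩, Function.surjInv_eq hsurj x⟩

theorem IsUnitFModule.of_exact {ι : M₁ →ₗ[R] M₂} {π : M₂ →ₗ[R] M₃}
    (hinj : Function.Injective ι) (hsurj : Function.Surjective π) (hexact : Function.Exact ι π)
    {F₁ : M₁ → M₁} {F₂ : M₂ →+ M₂} {F₃ : M₃ → M₃}
    (hF₂ : ∀ (r : R) (m : M₂), F₂ (r • m) = φ r • F₂ m)
    (hι : Function.Semiconj ι F₁ F₂) (hπ : Function.Semiconj π F₂ F₃)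
    (h₁ : IsUnitFModule φ F₁) (h₃ : IsUnitFModule φ F₃) : IsUnitFModule φ F₂ := by
  obtain ⟨θ₁, hθ₁, hbij₁⟩ := h₁
  obtain ⟨θ₃, hθ₃, hbij₃⟩ := h₃
  have hsqι := apply_lTensor_eq_of_semiconj hθ₁ (linearization_tmul F₂ hF₂) ι hι
  have hsqπ := apply_lTensor_eq_of_semiconj (linearization_tmul F₂ hF₂) hθ₃ π hπ
  let ιT := (ι.lTensor (Twisted R φ)).toAddMonoidHom
  let πT := (π.lTensor (Twisted R φ)).toAddMonoidHom
  refine ⟨linearization φ F₂ hF₂, linearization_tmul F₂ hF₂, ?_, ?_⟩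
  · exact AddMonoidHom.injective_of_injective_of_injective_of_left_exact ιT πT
      ι.toAddMonoidHom π.toAddMonoidHom
      (lTensor_exact _ hexact hsurj) hinj hbij₁.1 hbij₃.1 hsqι hsqπ
  · exact AddMonoidHom.surjective_of_surjective_of_surjective_of_right_exact ιT πT
      ι.toAddMonoidHom π.toAddMonoidHom
      hexact (LinearMap.lTensor_surjective _ hsurj) hbij₁.2 hbij₃.2 hsqι hsqπ

end FrobeniusModule

theorem unit_fg_closed_under_extensions_general
    (p : ℕ)
    (R : Type) [CommRing R]
    (e : ℕ)
    (φ : R →+* R) (hφ : ∀ r : R, φ r = r ^ p ^ e)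
    (M' M M'' : Type)
    [AddCommGroup M'] [Module R M'] [AddCommGroup M] [Module R M]
    [AddCommGroup M''] [Module R M'']
    (ι : M' →ₗ[R] M) (π : M →ₗ[R] M'')
    (hinj : Function.Injective ι) (hsurj : Function.Surjective π)
    (hexact : Function.Exact ι π)
    (F' : M' → M') (F : M → M) (F'' : M'' → M'')
    (hadd : ∀ x y : M, F (x + y) = F x + F y)
    (hsl : ∀ (r : R) (m : M), F (r • m) = r ^ p ^ e • F m)
    (hcommι : ∀ x : M', ι (F' x) = F (ι x))
    (hcommπ : ∀ x : M, π (F x) = F'' (π x))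
    (hunit' : IsUnitFModule φ F') (hfg' : IsFGFModule R F')
    (hunit'' : IsUnitFModule φ F'') (hfg'' : IsFGFModule R F'') :
    IsUnitFModule φ F ∧ IsFGFModule R F :=
  ⟨IsUnitFModule.of_exact (F₂ := AddMonoidHom.mk' F hadd) hinj hsurj hexact
      (fun r m => by simp only [AddMonoidHom.mk'_apply, hsl, hφ]) hcommι hcommπ hunit' hunit'',
    IsFGFModule.of_exact hsurj hexact hcommι hcommπ hfg' hfg''⟩

/-- Finitely generated unit `R[Fᵉ]`-modules are closed under
extensions: if in a short exact sequence `0 → M' → M → M'' → 0` compatible with the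
Frobenius actions the two outer terms are finitely generated unit
`R[Fᵉ]`-modules, then so is the middle term. -/
theorem unit_fg_closed_under_extensions
    (p : ℕ) [Fact p.Prime]
    (R : Type) [CommRing R] [IsNoetherianRing R] [CharP R p]
    (φp : R →+* R) (hφp : ∀ r : R, φp r = r ^ p) (hflat : φp.Flat)
    (e : ℕ) (he : 1 ≤ e)
    (φ : R →+* R) (hφ : ∀ r : R, φ r = r ^ p ^ e)
    (M' M M'' : Type)
    [AddCommGroup M'] [Module R M'] [AddCommGroup M] [Module R M]
    [AddCommGroup M''] [Module R M'']
    (ι : M' →ₗ[R] M) (π : M →ₗ[R] M'')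
    (hinj : Function.Injective ι) (hsurj : Function.Surjective π)
    (hexact : Function.Exact ι π)
    (F' : M' → M') (F : M → M) (F'' : M'' → M'')
    (hadd' : ∀ x y : M', F' (x + y) = F' x + F' y)
    (hsl' : ∀ (r : R) (m : M'), F' (r • m) = r ^ p ^ e • F' m)
    (hadd : ∀ x y : M, F (x + y) = F x + F y)
    (hsl : ∀ (r : R) (m : M), F (r • m) = r ^ p ^ e • F m)
    (hadd'' : ∀ x y : M'', F'' (x + y) = F'' x + F'' y)
    (hsl'' : ∀ (r : R) (m : M''), F'' (r • m) = r ^ p ^ e • F'' m)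
    (hcommι : ∀ x : M', ι (F' x) = F (ι x))
    (hcommπ : ∀ x : M, π (F x) = F'' (π x))
    (hunit' : IsUnitFModule φ F') (hfg' : IsFGFModule R F')
    (hunit'' : IsUnitFModule φ F'') (hfg'' : IsFGFModule R F'') :
    IsUnitFModule φ F ∧ IsFGFModule R F :=
  unit_fg_closed_under_extensions_general p R e φ hφ M' M M'' ι π hinj hsurj hexact F' F F'' hadd
    hsl hcommι hcommπ hunit' hfg' hunit'' hfg''
end

section
/- Let k be a field and A an associative unital k-algebra whose dimension as a k-vector space is strictly smaller than the cardinality of k. Let N be a simple left A-module. Then every A-linear endomorphism of N is algebraic over k; that is, the division ring End_A(N) is algebraic over k (where k maps into End_A(N) via scalar multiplication). -/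
/-!
If `f` were transcendental over `k`, the double centralizer of `f` in the division ring
`End_A(N)` would be a field containing `k(f)`, hence the `k`-linearly independent family
`(f - a)⁻¹`, `a ∈ k`; so `dim_k End_A(N) ≥ #k`. On the other hand, evaluation at any
`n ≠ 0` embeds `End_A(N)` into `N`, which is a quotient of `A` via `a ↦ a • n`; so
`dim_k End_A(N) ≤ dim_k A < #k`.
-/

open Cardinal

universe u v

theorem Subalgebra.isField_centralizer_centralizer {k D : Type*} [CommRing k] [DivisionRing D]
    [Algebra k D] {S : Set D} (hS : ∀ x ∈ S, ∀ y ∈ S, x * y = y * x) :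
    IsField (Subalgebra.centralizer k S.centralizer) where
  exists_pair_ne := ⟨0, 1, zero_ne_one⟩
  mul_comm x y := Subtype.ext <| Set.centralizer_centralizer_comm_of_comm hS _ x.2 _ y.2
  mul_inv_cancel {x} hx :=
    ⟨⟨x⁻¹, Set.inv_mem_centralizer₀ x.2⟩, Subtype.ext <| mul_inv_cancel₀ <| by simpa using hx⟩

theorem Transcendental.lift_cardinalMk_le_rank {k : Type u} {D : Type v} [Field k]
    [DivisionRing D] [Algebra k D] {x : D} (hx : Transcendental k x) :
    lift.{v} #k ≤ lift.{u} (Module.rank k D) := by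
  let C := Subalgebra.centralizer k (Set.centralizer {x})
  let _ : Field C := (Subalgebra.isField_centralizer_centralizer (S := {x}) (by simp)).toField
  have hxC : x ∈ C := Set.subset_centralizer_centralizer rfl
  have hx' : Transcendental k (⟨x, hxC⟩ : C) := fun h ↦ hx (h.algHom C.val)
  exact (hx'.linearIndependent_sub_inv.map' C.val.toLinearMap
    (LinearMap.ker_eq_bot.mpr Subtype.val_injective)).cardinal_lift_le_rank

theorem IsSimpleModule.rank_end_le_rank {k : Type*} {A N : Type u} [Field k] [Ring A]
    [Algebra k A] [AddCommGroup N] [Module A N] [Module k N] [SMulCommClass A k N]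
    [IsScalarTower k A N] [IsSimpleModule A N] :
    Module.rank k (Module.End A N) ≤ Module.rank k A := by
  have : Nontrivial N := IsSimpleModule.nontrivial A N
  obtain ⟨n, hn⟩ := exists_ne (0 : N)
  have heval_inj : Function.Injective (LinearMap.applyₗ' k n : Module.End A N →ₗ[k] N) :=
    (injective_iff_map_eq_zero _).2 fun φ hφ ↦
      by_contra fun h ↦ hn <| LinearMap.injective_of_ne_zero h (hφ.trans φ.map_zero.symm)
  calc Module.rank k (Module.End A N) ≤ Module.rank k N :=
        (LinearMap.applyₗ' k n).rank_le_of_injective heval_inj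
    _ ≤ Module.rank k A :=
        ((LinearMap.toSpanSingleton A N n).restrictScalars k).rank_le_of_surjective
          (IsSimpleModule.toSpanSingleton_surjective A hn)

/-- **Dixmier's amplification of Schur's lemma.** If `A` is a
`k`-algebra of `k`-dimension strictly smaller than the cardinality of `k` and `N`
is a simple left `A`-module, then every `A`-linear endomorphism of `N` is
algebraic over `k`. -/
theorem end_of_simple_module_is_algebraic
    (k : Type) [Field k]
    (A : Type) [Ring A] [Algebra k A]
    (hdim : Module.rank k A < Cardinal.mk k)
    (N : Type) [AddCommGroup N] [Module A N] [Module k N]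
    [SMulCommClass A k N] [IsScalarTower k A N]
    [IsSimpleModule A N]
    (f : Module.End A N) :
    IsAlgebraic k f := by
  classical
  by_contra hf
  have hk : #k ≤ Module.rank k (Module.End A N) := by
    simpa using Transcendental.lift_cardinalMk_le_rank hf
  exact (hk.trans IsSimpleModule.rank_end_le_rank).not_gt hdim
end

section
/- Let k be a field, A an associative unital k-algebra, and N a simple left A-module such that every A-linear endomorphism of N is multiplication by a scalar in k (End_A(N) = k). Let V be a finite-dimensional k-vector space and regard V ⊗_k N as a left A-module via the action of A on the factor N. Then the map V' ↦ V' ⊗_k N (the image of V' ⊗_k N in V ⊗_k N) is a bijection between the k-subspaces of V and the A-submodules of V ⊗_k N. -/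
/-!
The maps `V' ↦ N ⊗ V'` and `W ↦ {v | N ⊗ v ⊆ W}` form a Galois connection, and both composites
are the identity. A functional vanishing on `V'` but not at `v` contracts `N ⊗ V'` to `0` and
`n ⊗ v` to a nonzero multiple of `n`, so `N ⊗ v ⊄ N ⊗ V'` when `v ∉ V'`. Conversely, a basis of `V`
identifies `N ⊗ V` with a direct sum of copies of `N`, which is semisimple and isotypic of type `N`.
Hence an `A`-submodule `W` is the sum of simple submodules `S ≅ N`, and since `End_A N = k` every
`A`-linear map `N → N ⊗ V` has the form `n ↦ n ⊗ u`, so each such `S` is `N ⊗ u` for some `u`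
with `N ⊗ u ⊆ W`.
-/

open TensorProduct

theorem isIsotypicOfType_finsupp {R S : Type*} [Ring R] [AddCommGroup S] [Module R S]
    [IsSimpleModule R S] (ι : Type*) : IsIsotypicOfType R (ι →₀ S) S := by
  intro m _
  have := IsSimpleModule.nontrivial R m
  obtain ⟨x, hx⟩ := exists_ne (0 : m)
  obtain ⟨i, hi⟩ := Finsupp.ne_iff.mp (m.coe_eq_zero.not.mpr hx)
  exact ⟨.ofBijective (Finsupp.lapply i ∘ₗ m.subtype)
    (LinearMap.bijective_of_ne_zero fun h => hi congr($h x))⟩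

section

variable {k A N V : Type*} [Field k] [Ring A] [Algebra k A] [AddCommGroup N] [Module A N]
  [Module k N] [IsScalarTower k A N] [AddCommGroup V] [Module k V]

variable (A N) in
def tensorSpan (V' : Submodule k V) : Submodule A (N ⊗[k] V) :=
  Submodule.span A {x | ∃ (n : N) (v : V), v ∈ V' ∧ x = n ⊗ₜ[k] v}

def tensorCore (W : Submodule A (N ⊗[k] V)) : Submodule k V :=
  ⨅ n : N, (W.restrictScalars k).comap (TensorProduct.mk k N V n)

@[simp]
lemma mem_tensorCore {W : Submodule A (N ⊗[k] V)} {v : V} :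
    v ∈ tensorCore W ↔ ∀ n : N, n ⊗ₜ v ∈ W := by
  simp [tensorCore]

lemma tmul_mem_tensorSpan {V' : Submodule k V} (n : N) {v : V} (hv : v ∈ V') :
    n ⊗ₜ[k] v ∈ tensorSpan A N V' :=
  Submodule.subset_span ⟨n, v, hv, rfl⟩

lemma gc_tensorSpan_tensorCore :
    GaloisConnection (tensorSpan A N : Submodule k V → _) tensorCore := fun V' W => by
  simp only [tensorSpan, Submodule.span_le]
  constructor
  · exact fun h v hv => mem_tensorCore.mpr fun n => h ⟨n, v, hv, rfl⟩
  · rintro h _ ⟨n, v, hv, rfl⟩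
    exact mem_tensorCore.mp (h hv) n

variable (k A N) in
noncomputable def tensorEquivFinsupp {ι : Type*} [DecidableEq ι] (b : Module.Basis ι k V) :
    N ⊗[k] V ≃ₗ[A] ι →₀ N :=
  AlgebraTensorModule.congr (LinearEquiv.refl A N) b.repr ≪≫ₗ finsuppScalarRight k A N ι

@[simp]
lemma tensorEquivFinsupp_tmul_apply {ι : Type*} [DecidableEq ι] (b : Module.Basis ι k V)
    (n : N) (v : V) (i : ι) :
    tensorEquivFinsupp k A N b (n ⊗ₜ v) i = b.repr v i • n := by
  simp [tensorEquivFinsupp]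

instance [IsSemisimpleModule A N] : IsSemisimpleModule A (N ⊗[k] V) := by
  classical
  exact .congr (tensorEquivFinsupp k A N (Module.Basis.ofVectorSpace k V))

lemma tensorCore_tensorSpan [Nontrivial N] (V' : Submodule k V) :
    tensorCore (tensorSpan A N V') = V' := by
  refine le_antisymm (fun v hv => ?_) (gc_tensorSpan_tensorCore.le_u_l V')
  by_contra hvV'
  obtain ⟨φ, hφv, hV'φ⟩ := V'.exists_le_ker_of_notMem hvV'
  let p : N ⊗[k] V →ₗ[A] N :=
    (AlgebraTensorModule.rid k A N).toLinearMap ∘ₗ AlgebraTensorModule.lTensor A N φ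
  have hp_tmul (n : N) (w : V) : p (n ⊗ₜ w) = φ w • n := by simp [p]
  have hV'p : tensorSpan A N V' ≤ LinearMap.ker p :=
    gc_tensorSpan_tensorCore.l_le fun w hw => mem_tensorCore.mpr fun n => by
      simp [hp_tmul, LinearMap.mem_ker.mp (hV'φ hw)]
  obtain ⟨n, hn⟩ := exists_ne (0 : N)
  exact smul_ne_zero hφv hn <| hp_tmul n v ▸ hV'p (mem_tensorCore.mp hv n)

theorem isIsotypicOfType_tensorProduct [IsSimpleModule A N] :
    IsIsotypicOfType A (N ⊗[k] V) N := by
  classical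
  exact (tensorEquivFinsupp k A N (Module.Basis.ofVectorSpace k V)).isIsotypicOfType_iff.mpr
    (isIsotypicOfType_finsupp _)

lemma exists_forall_eq_tmul_of_linearMap [FiniteDimensional k V]
    (hEnd : ∀ g : N →ₗ[A] N, ∃ c : k, ∀ n : N, g n = c • n) (g : N →ₗ[A] N ⊗[k] V) :
    ∃ u : V, ∀ n : N, g n = n ⊗ₜ u := by
  let b := Module.finBasis k V
  let e := tensorEquivFinsupp k A N b
  choose c hc using fun i => hEnd (Finsupp.lapply i ∘ₗ e.toLinearMap ∘ₗ g)
  refine ⟨b.equivFun.symm c, fun n => e.injective (Finsupp.ext fun i => ?_)⟩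
  rw [tensorEquivFinsupp_tmul_apply, ← b.equivFun_apply, b.equivFun.apply_symm_apply]
  exact hc i n

lemma tensorSpan_tensorCore [IsSimpleModule A N] [FiniteDimensional k V]
    (hEnd : ∀ g : N →ₗ[A] N, ∃ c : k, ∀ n : N, g n = c • n) (W : Submodule A (N ⊗[k] V)) :
    tensorSpan A N (tensorCore W) = W := by
  refine le_antisymm (gc_tensorSpan_tensorCore.l_u_le W) ?_
  conv_lhs => rw [← IsSemisimpleModule.sSup_simples_le W]
  refine sSup_le fun S ⟨_, hSW⟩ x hx => ?_
  obtain ⟨e⟩ := isIsotypicOfType_tensorProduct S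
  obtain ⟨u, hu⟩ := exists_forall_eq_tmul_of_linearMap hEnd (S.subtype ∘ₗ e.symm.toLinearMap)
  have hxu : x = e ⟨x, hx⟩ ⊗ₜ u := by simpa using hu (e ⟨x, hx⟩)
  have huW : u ∈ tensorCore W := mem_tensorCore.mpr fun n => hSW (hu n ▸ (e.symm n).2)
  exact hxu ▸ tmul_mem_tensorSpan _ huW

end

theorem submodules_of_isotypic_module_general
    (k : Type) [Field k]
    (A : Type) [Ring A] [Algebra k A]
    (N : Type) [AddCommGroup N] [Module A N] [Module k N]
    [IsScalarTower k A N]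
    [IsSimpleModule A N]
    (hEnd : ∀ g : N →ₗ[A] N, ∃ c : k, ∀ n : N, g n = c • n)
    (V : Type) [AddCommGroup V] [Module k V] [FiniteDimensional k V] :
    Function.Bijective (fun V' : Submodule k V =>
      (Submodule.span A {x : N ⊗[k] V | ∃ (n : N) (v : V), v ∈ V' ∧ x = n ⊗ₜ[k] v} :
        Submodule A (N ⊗[k] V))) := by
  have := IsSimpleModule.nontrivial A N
  exact Function.bijective_iff_has_inverse.mpr
    ⟨tensorCore, tensorCore_tensorSpan, tensorSpan_tensorCore hEnd⟩

/-- If `N` is a simple left `A`-module over a `k`-algebra `A`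
with `End_A(N) = k`, and `V` is a finite-dimensional `k`-vector space, then
`V' ↦ N ⊗_k V'` (the image of `N ⊗_k V'` in `N ⊗_k V`, i.e. the `A`-submodule
generated by the pure tensors `n ⊗ v` with `v ∈ V'`) is a bijection between the
`k`-subspaces of `V` and the `A`-submodules of `N ⊗_k V`, where `A` acts through
the factor `N`. -/
theorem submodules_of_isotypic_module
    (k : Type) [Field k]
    (A : Type) [Ring A] [Algebra k A]
    (N : Type) [AddCommGroup N] [Module A N] [Module k N]
    [SMulCommClass A k N] [SMulCommClass k A N] [IsScalarTower k A N]
    [IsSimpleModule A N]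
    (hEnd : ∀ g : N →ₗ[A] N, ∃ c : k, ∀ n : N, g n = c • n)
    (V : Type) [AddCommGroup V] [Module k V] [FiniteDimensional k V] :
    Function.Bijective (fun V' : Submodule k V =>
      (Submodule.span A {x : N ⊗[k] V | ∃ (n : N) (v : V), v ∈ V' ∧ x = n ⊗ₜ[k] v} :
        Submodule A (N ⊗[k] V))) :=
  submodules_of_isotypic_module_general k A N hEnd V
end

section
/- Let p be a prime, k an algebraically closed field of characteristic p, e ≥ 1, q = p^e, and V a finite-dimensional k-vector space. Let F : V → V be an additive map satisfying F(c·v) = c^q·F(v) for all c ∈ k, v ∈ V (i.e. F is semilinear over the e-th Frobenius iterate of k), and suppose F is injective. Then V has a k-basis consisting of vectors fixed by F: there is a basis (b_1, …, b_n) of V with F(b_i) = b_i for all i. -/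
/-!
Let `f` be injective and semilinear over `c ↦ c ^ q`. On the span `U` of its fixed vectors `f` is
onto, and `f a - a = u` can be solved inside `U` by solving the Artin–Schreier equations
`a ^ q - a = c` coordinatewise. Hence if `U ≠ V`, a fixed vector of the injective map induced on
`V ⧸ U` lifts to a fixed vector of `f` outside `U`, which is absurd.

A nonzero fixed vector exists on every nonzero space: if `v, f v, …, f^[m] v` are independent and
`f^[m+1] v = ∑ cᵢ • f^[i] v`, then `∑ xᵢ • f^[i] v` is fixed as soon as `x₀ = c₀ t ^ q`,
`xₙ₊₁ = xₙ ^ q + cₙ₊₁ t ^ q` and `xₘ = t`. Thus `xₙ = Pₙ(t)` for the polynomials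
`Pₙ = cyclicFixedPoly q c n`, and `t` must be a nonzero root of `Pₘ(X) = X`, which exists because
`Pₘ` is a nonzero multiple of `X ^ q`.
-/
open Module Polynomial Submodule Finset Function

theorem span_subset_image_of_apply_smul {R M : Type*} [Semiring R] [AddCommMonoid M] [Module R M]
    (φ : M →+ M) {ψ : R → R} (hψ : Surjective ψ) {s : Set M}
    (hs : ∀ x ∈ s, ∀ c : R, φ (c • x) = ψ c • x) :
    (span R s : Set M) ⊆ φ '' span R s := by
  intro u hu
  -- `φ '' span R s` need not be a submodule, so induct on the claim for all multiples of `u`.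
  suffices ∀ d : R, ∃ a ∈ span R s, φ a = d • u by simpa using this 1
  induction hu using span_induction with
  | mem x hx =>
    intro d
    obtain ⟨c, rfl⟩ := hψ d
    exact ⟨c • x, smul_mem _ c (subset_span hx), hs x hx c⟩
  | zero => exact fun d => ⟨0, zero_mem _, by simp⟩
  | add x y _ _ ihx ihy =>
    intro d
    obtain ⟨a, ha, hax⟩ := ihx d
    obtain ⟨b, hb, hby⟩ := ihy d
    exact ⟨a + b, add_mem ha hb, by rw [map_add, hax, hby, smul_add]⟩
  | smul c x _ ih =>
    intro d
    simpa only [smul_smul] using ih (d * c)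

theorem surjective_pow_sub_self {K : Type*} [Field K] [IsAlgClosed K] {q : ℕ} (hq : 1 < q) :
    Surjective fun c : K => c ^ q - c := by
  have hdeg : (X ^ q - X : K[X]).natDegree = q := by
    rw [natDegree_sub_eq_left_of_natDegree_lt] <;> simp [hq]
  intro c
  obtain ⟨t, ht⟩ := IsAlgClosed.eval_surjective (p := (X ^ q - X : K[X])) (by omega) c
  exact ⟨t, by simpa using ht⟩

theorem exists_ne_zero_eval_eq_self {K : Type*} [Field K] [IsAlgClosed K] {P : K[X]}
    (hP : P ≠ 0) (hX : X ^ 2 ∣ P) : ∃ t ≠ 0, P.eval t = t := by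
  obtain ⟨Q, rfl⟩ := hX
  have hQ : Q ≠ 0 := right_ne_zero_of_mul hP
  obtain ⟨t, ht⟩ := IsAlgClosed.eval_surjective (p := X * Q) (by simp [natDegree_X_mul hQ]) 1
  refine ⟨t, ?_, ?_⟩
  · rintro rfl
    simp at ht
  · simp only [eval_mul, eval_X, eval_pow] at ht ⊢
    linear_combination t * ht

noncomputable def cyclicFixedPoly {R : Type*} [CommSemiring R] (q : ℕ) (c : ℕ → R) : ℕ → R[X]
  | 0 => C (c 0) * X ^ q
  | n + 1 => cyclicFixedPoly q c n ^ q + C (c (n + 1)) * X ^ q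

section CyclicFixedPoly

variable {R : Type*} {q : ℕ} {c : ℕ → R}

theorem X_pow_dvd_cyclicFixedPoly [CommSemiring R] (n : ℕ) : X ^ q ∣ cyclicFixedPoly q c n := by
  induction n with
  | zero => exact dvd_mul_left _ _
  | succ n ih =>
    refine dvd_add ?_ (dvd_mul_left _ _)
    rcases q.eq_zero_or_pos with rfl | hq
    · simp
    · exact (dvd_pow_self _ hq.ne').trans (pow_dvd_pow_of_dvd ih q)

theorem coeff_cyclicFixedPoly_self [CommSemiring R] (hq : 1 < q) (n : ℕ) :
    (cyclicFixedPoly q c n).coeff q = c n := by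
  cases n with
  | zero => simp [cyclicFixedPoly]
  | succ n =>
    have hvanish : (cyclicFixedPoly q c n ^ q).coeff q = 0 := by
      have : X ^ (q * q) ∣ cyclicFixedPoly q c n ^ q := by
        rw [pow_mul]
        exact pow_dvd_pow_of_dvd (X_pow_dvd_cyclicFixedPoly n) q
      exact X_pow_dvd_iff.mp this q (by nlinarith)
    simp [cyclicFixedPoly, hvanish]

theorem eq_zero_of_cyclicFixedPoly_eq_zero [CommRing R] [IsDomain R] (hq : 1 < q) {n : ℕ}
    (h : cyclicFixedPoly q c n = 0) {j : ℕ} (hj : j ≤ n) : c j = 0 := by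
  have hlast : ∀ n, cyclicFixedPoly q c n = 0 → c n = 0 := fun n h => by
    rw [← coeff_cyclicFixedPoly_self (c := c) hq n, h, coeff_zero]
  induction n with
  | zero => exact Nat.le_zero.mp hj ▸ hlast 0 h
  | succ n ih =>
    rcases hj.lt_or_eq with hj | rfl
    · refine ih ((pow_eq_zero_iff (by omega : q ≠ 0)).mp ?_) (by omega)
      simpa only [cyclicFixedPoly, hlast _ h, map_zero, zero_mul, add_zero] using h
    · exact hlast _ h

end CyclicFixedPoly

theorem exists_linearIndependent_fin_and_eq_sum {K V : Type*} [DivisionRing K] [AddCommGroup V]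
    [Module K V] [FiniteDimensional K V] {g : ℕ → V} (h0 : g 0 ≠ 0) :
    ∃ (m : ℕ) (c : ℕ → K), LinearIndependent K (fun i : Fin (m + 1) => g i) ∧
      g (m + 1) = ∑ i ∈ range (m + 1), c i • g i := by
  classical
  have hdep : ∃ n, ¬ LinearIndependent K (fun i : Fin (n + 1) => g i) :=
    ⟨finrank K V, fun h => by simpa using h.fintype_card_le_finrank⟩
  obtain ⟨m, hm⟩ : ∃ m, Nat.find hdep = m + 1 := by
    refine Nat.exists_eq_succ_of_ne_zero fun h => Nat.find_spec hdep ?_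
    rw [h]
    exact LinearIndependent.of_subsingleton (ι := Fin 1) 0 h0
  have hli : LinearIndependent K (fun i : Fin (m + 1) => g i) :=
    not_not.mp (Nat.find_min hdep (by omega))
  have hmem : g (m + 1) ∈ span K (Set.range fun i : Fin (m + 1) => g i) := by
    by_contra h
    apply hm ▸ Nat.find_spec hdep
    convert linearIndependent_finSnoc.mpr ⟨hli, h⟩ using 1
    ext i
    induction i using Fin.lastCases <;> simp
  obtain ⟨c, hc⟩ := (mem_span_range_iff_exists_fun K).mp hmem
  refine ⟨m, fun n => if h : n < m + 1 then c ⟨n, h⟩ else 0, hli, ?_⟩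
  rw [← hc, ← Fin.sum_univ_eq_sum_range]
  simp [Fin.is_le]

theorem apply_sum_iterate_eq_self {K V : Type*} [CommRing K] [AddCommGroup V] [Module K V]
    {σ : K →+* K} (f : V →ₛₗ[σ] V) {v : V} {m : ℕ} {c x : ℕ → K}
    (hrel : f^[m + 1] v = ∑ i ∈ range (m + 1), c i • f^[i] v)
    (hx0 : x 0 = c 0 * σ (x m)) (hxsucc : ∀ n < m, x (n + 1) = σ (x n) + c (n + 1) * σ (x m)) :
    f (∑ i ∈ range (m + 1), x i • f^[i] v) = ∑ i ∈ range (m + 1), x i • f^[i] v := by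
  calc f (∑ i ∈ range (m + 1), x i • f^[i] v)
      = ∑ i ∈ range m, σ (x i) • f^[i + 1] v + σ (x m) • f^[m + 1] v := by
        rw [sum_range_succ, map_add, map_sum]
        simp only [map_smulₛₗ, iterate_succ_apply']
    _ = ∑ i ∈ range m, σ (x i) • f^[i + 1] v
          + ∑ i ∈ range (m + 1), (c i * σ (x m)) • f^[i] v := by
        simp only [hrel, smul_sum, smul_smul, mul_comm]
    _ = ∑ i ∈ range (m + 1), x i • f^[i] v := by
        rw [sum_range_succ' _ m, sum_range_succ' _ m, ← add_assoc, ← sum_add_distrib, hx0]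
        congr 1
        refine sum_congr rfl fun i hi => ?_
        rw [hxsucc i (mem_range.mp hi), add_smul]

section Frobenius

variable {k V : Type*} [Field k] [AddCommGroup V] [Module k V]

theorem mem_span_fixedPoints_of_apply_mem {σ : k →+* k} (hσ : Surjective σ) {f : V →ₛₗ[σ] V}
    (hf : Injective f) {v : V} (hv : f v ∈ span k (fixedPoints f)) :
    v ∈ span k (fixedPoints f) := by
  obtain ⟨a, ha, hav⟩ := span_subset_image_of_apply_smul f.toAddMonoidHom hσ
    (fun x (hx : f x = x) c => by simp [hx]) hv
  exact hf hav ▸ ha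

variable {p e : ℕ} [Fact p.Prime] [CharP k p] [IsAlgClosed k]
  (f : V →ₛₗ[iterateFrobenius k p e] V)

theorem exists_mem_span_fixedPoints_apply_sub_eq (he : e ≠ 0) {u : V}
    (hu : u ∈ span k (fixedPoints f)) : ∃ a ∈ span k (fixedPoints f), f a - a = u :=
  span_subset_image_of_apply_smul (f.toAddMonoidHom - AddMonoidHom.id V)
    (surjective_pow_sub_self (Nat.one_lt_pow he (Fact.out : p.Prime).one_lt))
    (fun x (hx : f x = x) c => by simp [hx, sub_smul, iterateFrobenius_def]) hu

theorem exists_ne_zero_apply_eq_self [FiniteDimensional k V] [Nontrivial V] (he : e ≠ 0)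
    (hf : Injective f) : ∃ w ≠ 0, f w = w := by
  have hq : 1 < p ^ e := Nat.one_lt_pow he (Fact.out : p.Prime).one_lt
  obtain ⟨v, hv⟩ := exists_ne (0 : V)
  obtain ⟨m, c, hli, hrel⟩ :=
    exists_linearIndependent_fin_and_eq_sum (K := k) (g := fun n => f^[n] v) hv
  set P := cyclicFixedPoly (p ^ e) c
  have hPm : P m ≠ 0 := by
    intro hP
    have : f^[m + 1] v = f^[m + 1] 0 := by
      rw [iterate_map_zero, hrel]
      exact sum_eq_zero fun i hi =>
        by rw [eq_zero_of_cyclicFixedPoly_eq_zero hq hP (mem_range_succ_iff.mp hi), zero_smul]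
    exact hv (hf.iterate _ this)
  obtain ⟨t, ht0, ht⟩ := exists_ne_zero_eval_eq_self hPm
    ((pow_dvd_pow X hq).trans (X_pow_dvd_cyclicFixedPoly m))
  refine ⟨∑ i ∈ range (m + 1), (P i).eval t • f^[i] v, fun h => ht0 ?_, ?_⟩
  · rw [← Fin.sum_univ_eq_sum_range (fun i => (P i).eval t • f^[i] v)] at h
    simpa [ht] using Fintype.linearIndependent_iff.mp hli _ h (Fin.last m)
  · refine apply_sum_iterate_eq_self f hrel ?_ fun n _ => ?_ <;>
      simp [P, cyclicFixedPoly, ht, iterateFrobenius_def]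

theorem span_fixedPoints_eq_top [FiniteDimensional k V] (he : e ≠ 0) (hf : Injective f) :
    span k (fixedPoints f) = ⊤ := by
  set U := span k (fixedPoints f)
  by_contra hU
  have : Nontrivial (V ⧸ U) := Quotient.nontrivial_iff.mpr hU
  let g := U.mapQ U f (span_le.mpr fun x (hx : IsFixedPt f x) => by
    simpa [mem_comap, hx.eq] using (subset_span hx : x ∈ U))
  have hg : Injective g := by
    rw [← LinearMap.ker_eq_bot, ker_mapQ, eq_bot_iff, map_le_iff_le_comap, comap_bot, ker_mkQ]
    exact fun v hv => mem_span_fixedPoints_of_apply_mem (bijective_iterateFrobenius k p e).2 hf hv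
  obtain ⟨w', hw'0, hw'⟩ := exists_ne_zero_apply_eq_self g he hg
  obtain ⟨w, rfl⟩ := U.mkQ_surjective w'
  have hw : w - f w ∈ U := (Submodule.Quotient.eq U).mp hw'.symm
  obtain ⟨a, ha, hfa⟩ := exists_mem_span_fixedPoints_apply_sub_eq f he hw
  have hfix : f (w + a) = w + a := by
    rw [map_add]
    linear_combination (norm := abel) hfa
  refine hw'0 ((Submodule.Quotient.mk_eq_zero U).mpr ?_)
  simpa using sub_mem (subset_span (R := k) (show w + a ∈ fixedPoints f from hfix)) ha

end Frobenius

theorem exists_basis_fin_finrank_of_span_eq_top {K V : Type*} [DivisionRing K] [AddCommGroup V]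
    [Module K V] [FiniteDimensional K V] {s : Set V} (hs : span K s = ⊤) :
    ∃ b : Basis (Fin (finrank K V)) K V, ∀ i, b i ∈ s := by
  let b := Basis.ofSpan hs.ge
  refine ⟨b.reindex (b.indexEquiv (Module.finBasis K V)), fun i => ?_⟩
  rw [Basis.reindex_apply]
  exact Basis.ofSpan_subset hs.ge (Set.mem_range_self _)

/-- **Dieudonné.** Let `k` be an algebraically closed field of
characteristic `p`, `q = pᵉ`, and `V` a finite-dimensional `k`-vector space with
an injective additive `q`-semilinear map `F : V → V`.  Then `V` has a `k`-basis
consisting of `F`-fixed vectors. -/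
theorem basis_of_frobenius_fixed_vectors
    (p : ℕ) [Fact p.Prime]
    (k : Type) [Field k] [IsAlgClosed k] [CharP k p]
    (e : ℕ) (he : 1 ≤ e)
    (V : Type) [AddCommGroup V] [Module k V] [FiniteDimensional k V]
    (F : V → V)
    (hadd : ∀ x y : V, F (x + y) = F x + F y)
    (hsl : ∀ (c : k) (v : V), F (c • v) = c ^ p ^ e • F v)
    (hinj : Function.Injective F) :
    ∃ b : Module.Basis (Fin (Module.finrank k V)) k V, ∀ i, F (b i) = b i := by
  let f : V →ₛₗ[iterateFrobenius k p e] V := { toFun := F, map_add' := hadd, map_smul' := hsl }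
  exact exists_basis_fin_finrank_of_span_eq_top (span_fixedPoints_eq_top f (by omega) hinj)
end

section
/- Let p be a prime and let K be the perfect closure of the rational function field F_p(X) over the prime field F_p (so K = F_p(X)^{1/p^∞}), with X ∈ K the image of the variable. Fix e ≥ 1 and write q = p^e. Define F : K × K → K × K by F(v₁, v₂) = (v₂^q, v₁^q + X·v₂^q). Then F is an injective additive map satisfying F(c·v) = c^q·F(v) for c ∈ K, and for every r ≥ 1 the only K-linear subspaces W ⊆ K × K with F^r(W) ⊆ W are {0} and K × K. In particular, (K², F) is a simple unit K[F]-module, while (K being perfect, so that every K-subspace is a D_K-submodule) it is not simple as a D_K-module. -/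
/-- The rational function field `F_p(X)`, realized as the fraction field of the
polynomial ring `F_p[X]`. -/
abbrev FpRatFunc (p : ℕ) [Fact p.Prime] : Type :=
  FractionRing (Polynomial (ZMod p))

/-- The perfect closure `K = F_p(X)^{1/p^∞}` of the rational function field. -/
abbrev PerfClos (p : ℕ) [Fact p.Prime] : Type :=
  PerfectClosure (FpRatFunc p) p

/-!
A proper nonzero `F^r`-stable subspace would be a line `K v`, i.e. `cross v (F^r v) = 0` with
`v ≠ 0`. Since `cross (F v) (F w) = (cross w v)^q`, this property passes from `v` to `F^n v`,
and each application of `F` lowers by `e` the number of `p`-th roots needed to bring the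
coordinates into `F_p(X)`. So we may assume `v ∈ F_p(X)²`, and after scaling, that `v` is a
coprime pair of polynomials. Then `F^r v` is again a coprime pair proportional to `v`, so its
coordinates are associated to those of `v`. But any `F w` with `w ≠ 0` has
`deg (F w).1 < deg (F w).2`, and on such pairs `F` strictly increases `deg (·).2`.
-/

def frobPair {A : Type*} [CommSemiring A] (q : ℕ) (c : A) (v : A × A) : A × A :=
  (v.2 ^ q, v.1 ^ q + c * v.2 ^ q)

def cross {A : Type*} [CommRing A] (v w : A × A) : A :=
  v.1 * w.2 - v.2 * w.1

section CommRing

variable {A B : Type*} [CommRing A] [CommRing B]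

theorem cross_smul_smul (μ ν : A) (v w : A × A) :
    cross (μ • v) (ν • w) = μ * ν * cross v w := by
  simp only [cross, Prod.smul_fst, Prod.smul_snd, smul_eq_mul]
  ring

theorem map_cross (ψ : A →+* B) (v w : A × A) :
    ψ (cross v w) = cross (Prod.map ψ ψ v) (Prod.map ψ ψ w) := by
  simp [cross]

theorem semiconj_map_frobPair (ψ : A →+* B) (q : ℕ) (c : A) :
    Function.Semiconj (Prod.map ψ ψ) (frobPair q c) (frobPair q (ψ c)) := fun v => by
  simp [frobPair]

theorem frobPair_smul (q : ℕ) (c μ : A) (v : A × A) :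
    frobPair q c (μ • v) = μ ^ q • frobPair q c v := by
  ext <;> simp only [frobPair, Prod.smul_fst, Prod.smul_snd, smul_eq_mul] <;> ring

theorem frobPair_iterate_smul (q : ℕ) (c μ : A) (n : ℕ) (v : A × A) :
    (frobPair q c)^[n] (μ • v) = μ ^ q ^ n • (frobPair q c)^[n] v := by
  induction n generalizing μ v with
  | zero => simp
  | succ n ih =>
    rw [Function.iterate_succ_apply, Function.iterate_succ_apply, frobPair_smul, ih, ← pow_mul,
      ← pow_succ']

theorem isCoprime_frobPair_iterate (q : ℕ) (c : A) (n : ℕ) {v : A × A}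
    (hv : IsCoprime v.1 v.2) :
    IsCoprime ((frobPair q c)^[n] v).1 ((frobPair q c)^[n] v).2 := by
  induction n generalizing v with
  | zero => exact hv
  | succ n ih => exact ih (hv.symm.pow.add_mul_right_right c)

theorem frobPair_iterate_ne_zero [IsReduced A] {q : ℕ} (hq : q ≠ 0) (c : A) (n : ℕ)
    {v : A × A} (hv : v ≠ 0) : (frobPair q c)^[n] v ≠ 0 := by
  induction n generalizing v with
  | zero => exact hv
  | succ n ih =>
    refine ih fun h => hv ?_
    have h2 : v.2 = 0 := pow_eq_zero_iff hq |>.mp congr(($h).1)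
    have h1 : v.1 ^ q + c * v.2 ^ q = 0 := congr(($h).2)
    rw [h2, zero_pow hq, mul_zero, add_zero, pow_eq_zero_iff hq] at h1
    exact Prod.ext h1 h2

theorem associated_of_cross_eq_zero [IsDomain A] {v w : A × A} (hv : IsCoprime v.1 v.2)
    (hw : IsCoprime w.1 w.2) (h : cross v w = 0) : Associated v.1 w.1 ∧ Associated v.2 w.2 := by
  have h' : v.1 * w.2 = v.2 * w.1 := sub_eq_zero.mp h
  refine ⟨associated_of_dvd_dvd ?_ ?_, associated_of_dvd_dvd ?_ ?_⟩
  · exact hv.dvd_of_dvd_mul_left ⟨w.2, h'.symm⟩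
  · exact hw.dvd_of_dvd_mul_left ⟨v.2, by linear_combination h'⟩
  · exact hv.symm.dvd_of_dvd_mul_left ⟨w.1, h'⟩
  · exact hw.symm.dvd_of_dvd_mul_left ⟨v.1, by linear_combination -h'⟩

end CommRing

theorem eq_top_of_cross_ne_zero {K : Type*} [Field K] {W : Submodule K (K × K)} {v w : K × K}
    (hv : v ∈ W) (hw : w ∈ W) (h : cross v w ≠ 0) : W = ⊤ := by
  refine Submodule.eq_top_iff'.mpr fun z => ?_
  convert W.add_mem (W.smul_mem (cross z w / cross v w) hv) (W.smul_mem (cross v z / cross v w) hw)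
  ext <;> simp only [Prod.fst_add, Prod.snd_add, Prod.smul_fst, Prod.smul_snd, smul_eq_mul] <;>
    field_simp <;> simp only [cross] <;> ring

section ExpChar

variable {K : Type*} [CommRing K] {p : ℕ} [ExpChar K p] (e : ℕ)

theorem frobPair_add (c : K) (v w : K × K) :
    frobPair (p ^ e) c (v + w) = frobPair (p ^ e) c v + frobPair (p ^ e) c w := by
  ext
  · exact add_pow_expChar_pow ..
  · simp only [frobPair, Prod.fst_add, Prod.snd_add, add_pow_expChar_pow]
    ring

theorem cross_frobPair (c : K) (v w : K × K) :
    cross (frobPair (p ^ e) c v) (frobPair (p ^ e) c w) = cross w v ^ p ^ e := by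
  simp only [cross, frobPair, sub_pow_expChar_pow, mul_pow]
  ring

theorem cross_frobPair_iterate_eq_zero_iff [IsReduced K] (c : K) (n : ℕ) (v w : K × K) :
    cross ((frobPair (p ^ e) c)^[n] v) ((frobPair (p ^ e) c)^[n] w) = 0 ↔ cross v w = 0 := by
  induction n generalizing v w with
  | zero => rfl
  | succ n ih =>
    rw [Function.iterate_succ_apply, Function.iterate_succ_apply, ih, cross_frobPair,
      pow_eq_zero_iff (expChar_pow_pos K p e).ne',
      show cross w v = -cross v w by simp only [cross]; ring, neg_eq_zero]

theorem frobPair_injective [IsReduced K] (c : K) : Function.Injective (frobPair (p ^ e) c) := by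
  intro v w h
  have h2 : v.2 = w.2 := iterateFrobenius_inj K p e congr(($h).1)
  have h1 : v.1 ^ p ^ e = w.1 ^ p ^ e := by simpa [frobPair, h2] using congr(($h).2)
  exact Prod.ext (iterateFrobenius_inj K p e h1) h2

theorem frobPair_iterate_mem {L : Subring K} {c : K} (hc : c ∈ L) (n : ℕ) {v : K × K}
    (h1 : v.1 ^ p ^ (e * n) ∈ L) (h2 : v.2 ^ p ^ (e * n) ∈ L) :
    ((frobPair (p ^ e) c)^[n] v).1 ∈ L ∧ ((frobPair (p ^ e) c)^[n] v).2 ∈ L := by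
  induction n generalizing v with
  | zero =>
    simp only [mul_zero, pow_zero, pow_one] at h1 h2
    exact ⟨h1, h2⟩
  | succ n ih =>
    have hpow : ∀ x : K, (x ^ p ^ e) ^ p ^ (e * n) = x ^ p ^ (e * (n + 1)) := fun x => by
      rw [← pow_mul, ← pow_add]; ring_nf
    refine ih ?_ ?_
    · simpa only [frobPair, hpow] using h2
    · simp only [frobPair, add_pow_expChar_pow, mul_pow, hpow]
      exact L.add_mem h1 (L.mul_mem (L.pow_mem hc _) h2)

end ExpChar

theorem exists_cross_frobPair_iterate_eq_zero_of_isPRadical {k K : Type*} [Field k] [Field K]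
    {p : ℕ} [ExpChar K p] (i : k →+* K) [IsPRadical i p] {e : ℕ} (he : e ≠ 0) (c : k) (r : ℕ)
    {v : K × K} (hv : v ≠ 0) (h : cross v ((frobPair (p ^ e) (i c))^[r] v) = 0) :
    ∃ w : k × k, w ≠ 0 ∧ cross w ((frobPair (p ^ e) c)^[r] w) = 0 := by
  obtain ⟨n₁, a₁, ha₁⟩ := IsPRadical.pow_mem i p v.1
  obtain ⟨n₂, a₂, ha₂⟩ := IsPRadical.pow_mem i p v.2
  set n := n₁ + n₂
  have hmem {m : ℕ} {x : K} {y : k} (hy : i y = x ^ p ^ m) (hm : m ≤ n) :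
      x ^ p ^ (e * n) ∈ i.range := by
    have hmn : m ≤ e * n := hm.trans (Nat.le_mul_of_pos_left n (Nat.pos_of_ne_zero he))
    refine ⟨y ^ p ^ (e * n - m), ?_⟩
    rw [map_pow, hy, ← pow_mul, ← pow_add, Nat.add_sub_cancel' hmn]
  obtain ⟨⟨b₁, hb₁⟩, ⟨b₂, hb₂⟩⟩ := frobPair_iterate_mem e (i.mem_range_self c) n
    (hmem ha₁ (Nat.le_add_right n₁ n₂)) (hmem ha₂ (Nat.le_add_left n₂ n₁))
  have hb : Prod.map i i (b₁, b₂) = (frobPair (p ^ e) (i c))^[n] v := Prod.ext hb₁ hb₂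
  refine ⟨(b₁, b₂), fun h0 => ?_, i.injective ?_⟩
  · refine frobPair_iterate_ne_zero (expChar_pow_pos K p e).ne' (i c) n hv ?_
    rw [← hb, h0]
    exact Prod.ext (map_zero i) (map_zero i)
  · rw [map_zero, map_cross, (semiconj_map_frobPair i (p ^ e) c).iterate_right r (b₁, b₂), hb,
      Function.Commute.iterate_iterate_self _ r n v]
    exact (cross_frobPair_iterate_eq_zero_iff e (i c) n _ _).mpr h

section Polynomial

open Polynomial

variable {R : Type*} [CommRing R] [IsDomain R] {q : ℕ}

theorem degree_frobPair_X_fst_lt_snd (hq : 2 ≤ q) {a : R[X] × R[X]} (ha : a ≠ 0) :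
    (frobPair q X a).1.degree < (frobPair q X a).2.degree := by
  simp only [frobPair]
  rcases eq_or_ne a.2 0 with h₂ | h₂
  · have h₁ : a.1 ≠ 0 := fun h₁ => ha (Prod.ext h₁ h₂)
    rw [h₂, zero_pow (by omega), mul_zero, add_zero, degree_zero, bot_lt_iff_ne_bot, ne_eq,
      degree_eq_bot]
    exact pow_ne_zero q h₁
  · have hX : (X * a.2 ^ q).natDegree = q * a.2.natDegree + 1 := by
      rw [natDegree_X_mul (pow_ne_zero q h₂), natDegree_pow]
    refine degree_lt_degree ?_
    rcases le_or_gt a.1.natDegree a.2.natDegree with hle | hlt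
    · have : q * a.1.natDegree ≤ q * a.2.natDegree := Nat.mul_le_mul_left q hle
      rw [natDegree_add_eq_right_of_natDegree_lt (by rw [natDegree_pow, hX]; omega), hX,
        natDegree_pow]
      omega
    · have : q * (a.2.natDegree + 1) ≤ q * a.1.natDegree := Nat.mul_le_mul_left q hlt
      rw [natDegree_add_eq_left_of_natDegree_lt (by rw [natDegree_pow, hX]; linarith),
        natDegree_pow, natDegree_pow]
      linarith

theorem degree_snd_lt_degree_frobPair_X_snd (hq : q ≠ 0) {a : R[X] × R[X]}
    (h : a.1.degree < a.2.degree) : a.2.degree < (frobPair q X a).2.degree := by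
  have h₂ : a.2 ≠ 0 := ne_bot_of_gt h |> degree_ne_bot.mp
  have hX : (X * a.2 ^ q).natDegree = q * a.2.natDegree + 1 := by
    rw [natDegree_X_mul (pow_ne_zero q h₂), natDegree_pow]
  have hle : q * a.1.natDegree ≤ q * a.2.natDegree :=
    Nat.mul_le_mul_left q (natDegree_le_natDegree h.le)
  have hq' : a.2.natDegree ≤ q * a.2.natDegree := Nat.le_mul_of_pos_left _ (Nat.pos_of_ne_zero hq)
  refine degree_lt_degree ?_
  simp only [frobPair]
  rw [natDegree_add_eq_right_of_natDegree_lt (by rw [natDegree_pow, hX]; omega), hX]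
  omega

theorem degree_snd_lt_degree_frobPair_X_iterate_snd (hq : 2 ≤ q) (n : ℕ) {a : R[X] × R[X]}
    (h : a.1.degree < a.2.degree) : a.2.degree < ((frobPair q X)^[n + 1] a).2.degree := by
  induction n generalizing a with
  | zero => exact degree_snd_lt_degree_frobPair_X_snd (by omega) h
  | succ n ih =>
    have ha : a ≠ 0 := fun ha => (ne_bot_of_gt h) (by rw [ha, Prod.snd_zero, degree_zero])
    rw [Function.iterate_succ_apply]
    exact (degree_snd_lt_degree_frobPair_X_snd (by omega) h).trans
      (ih (degree_frobPair_X_fst_lt_snd hq ha))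

theorem cross_frobPair_X_iterate_ne_zero (hq : 2 ≤ q) {a : R[X] × R[X]} (ha : IsCoprime a.1 a.2)
    {r : ℕ} (hr : r ≠ 0) : cross a ((frobPair q X)^[r] a) ≠ 0 := by
  obtain ⟨n, rfl⟩ := Nat.exists_eq_succ_of_ne_zero hr
  intro h
  obtain ⟨h₁, h₂⟩ := associated_of_cross_eq_zero ha (isCoprime_frobPair_iterate q X _ ha) h
  have ha₀ : a ≠ 0 := fun ha₀ => not_isCoprime_zero_zero (by rwa [ha₀] at ha)
  have hdeg : a.1.degree < a.2.degree := by
    rw [degree_eq_degree_of_associated h₁, degree_eq_degree_of_associated h₂,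
      Function.iterate_succ_apply']
    exact degree_frobPair_X_fst_lt_snd hq (frobPair_iterate_ne_zero (by omega) X n ha₀)
  exact (degree_snd_lt_degree_frobPair_X_iterate_snd hq n hdeg).ne
    (degree_eq_degree_of_associated h₂)

theorem exists_eq_smul_map_isCoprime {R Frac : Type*} [CommRing R] [IsDomain R]
    [UniqueFactorizationMonoid R] [IsBezout R] [Field Frac] [Algebra R Frac]
    [IsFractionRing R Frac] (w : Frac × Frac) :
    ∃ (μ : Frac) (a : R × R), IsCoprime a.1 a.2 ∧
      w = μ • Prod.map (algebraMap R Frac) (algebraMap R Frac) a := by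
  rcases eq_or_ne w.2 0 with h₂ | h₂
  · exact ⟨w.1, (1, 0), isCoprime_one_left, Prod.ext (by simp) (by simp [h₂])⟩
  · obtain ⟨a, b, hab, hx⟩ := IsFractionRing.exists_reduced_fraction R (w.1 / w.2)
    have hb : algebraMap R Frac b ≠ 0 := IsFractionRing.to_map_ne_zero_of_mem_nonZeroDivisors b.2
    rw [IsFractionRing.mk'_eq_div, div_eq_div_iff hb h₂] at hx
    refine ⟨w.2 / algebraMap R Frac b, (a, b), hab.isCoprime, Prod.ext ?_ ?_⟩
    · simp only [Prod.smul_fst, Prod.map_fst, smul_eq_mul]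
      field_simp
      linear_combination hx.symm
    · simp only [Prod.smul_snd, Prod.map_snd, smul_eq_mul]
      field_simp

theorem cross_frobPair_iterate_ne_zero_of_isPRadical {k Frac K : Type*} [Field k] [Field Frac]
    [Algebra k[X] Frac] [IsFractionRing k[X] Frac] [Field K] {p : ℕ} [ExpChar K p]
    (hp : p.Prime) (i : Frac →+* K) [IsPRadical i p] {e : ℕ} (he : e ≠ 0) {r : ℕ} (hr : r ≠ 0)
    {v : K × K} (hv : v ≠ 0) :
    cross v ((frobPair (p ^ e) (i (algebraMap k[X] Frac X)))^[r] v) ≠ 0 := by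
  intro h
  obtain ⟨w, hw, hw'⟩ := exists_cross_frobPair_iterate_eq_zero_of_isPRadical i he _ r hv h
  obtain ⟨μ, a, ha, rfl⟩ := exists_eq_smul_map_isCoprime (R := k[X]) w
  have hμ : μ ≠ 0 := by
    rintro rfl
    exact hw (zero_smul _ _)
  rw [frobPair_iterate_smul, cross_smul_smul,
    ← (semiconj_map_frobPair (algebraMap k[X] Frac) _ X).iterate_right, ← map_cross] at hw'
  refine cross_frobPair_X_iterate_ne_zero (hp.two_le.trans (Nat.le_self_pow he p)) ha hr ?_
  exact IsFractionRing.injective k[X] Frac (by simpa [hμ] using hw')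

end Polynomial

/-- Let `K = F_p(X)^{1/p^∞}` be the perfect closure of the
rational function field and `q = pᵉ`.  The map
`F(v₁, v₂) = (v₂^q, v₁^q + X·v₂^q)` on `K × K` is an injective, additive,
`q`-semilinear map, and for every `r ≥ 1` the only `F^r`-stable `K`-subspaces of
`K × K` are `0` and `K × K`; so `(K², F)` is a simple unit `K[F]`-module, while
(as `K` is perfect, `D_K = K`, so `K`-subspaces are exactly `D_K`-submodules) it
is not `D_K`-simple. -/
theorem simple_unit_not_D_simple_example
    (p : ℕ) [Fact p.Prime]
    (e : ℕ) (he : 1 ≤ e)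
    (X : PerfClos p)
    (hX : X = PerfectClosure.of (FpRatFunc p) p
      (algebraMap (Polynomial (ZMod p)) (FpRatFunc p) Polynomial.X))
    (F : PerfClos p × PerfClos p → PerfClos p × PerfClos p)
    (hF : ∀ v : PerfClos p × PerfClos p,
      F v = (v.2 ^ p ^ e, v.1 ^ p ^ e + X * v.2 ^ p ^ e)) :
    Function.Injective F ∧
    (∀ v w : PerfClos p × PerfClos p, F (v + w) = F v + F w) ∧
    (∀ (c : PerfClos p) (v : PerfClos p × PerfClos p), F (c • v) = c ^ p ^ e • F v) ∧
    (∀ r : ℕ, 1 ≤ r →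
      ∀ W : Submodule (PerfClos p) (PerfClos p × PerfClos p),
        (∀ w ∈ W, F^[r] w ∈ W) → W = ⊥ ∨ W = ⊤) ∧
    (∃ W : Submodule (PerfClos p) (PerfClos p × PerfClos p), W ≠ ⊥ ∧ W ≠ ⊤) := by
  obtain rfl : F = frobPair (p ^ e) X := funext hF
  refine ⟨frobPair_injective e X, frobPair_add e X, frobPair_smul (p ^ e) X, ?_, ?_⟩
  · intro r hr W hW
    refine or_iff_not_imp_left.mpr fun hW₀ => ?_
    obtain ⟨v, hvW, hv⟩ := Submodule.exists_mem_ne_zero_of_ne_bot hW₀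
    refine eq_top_of_cross_ne_zero hvW (hW v hvW) ?_
    rw [hX]
    exact cross_frobPair_iterate_ne_zero_of_isPRadical Fact.out _ (by omega) (by omega) hv
  · refine ⟨(⊤ : Submodule (PerfClos p) (PerfClos p)).prod ⊥, ?_, ?_⟩ <;>
      simp [Submodule.prod_eq_bot_iff, Submodule.prod_eq_top_iff]
end
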